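/- Assume θ ∈ [0, π/2] (equivalently ε ≤ 0) and that 4p(z)³ + 27q(z)² ≤ 0 for all z ∈ (0,1). Then the product p(z)·(1 + g(z)) is monotone decreasing on (0,1), and consequently the derivative of τ(z, 2) = √(−p(z))·cos((1/2)·arccos(g(z))) satisfies dτ(z,2)/dz = −(p·(1+g))′(z) / (2√(−2p(z)(1+g(z)))) ≥ 0 for all z ∈ (0,1). -/

import Mathlib

/-!
Put `v = √(-p)` and `c = 3√3/2`. For `p < 0` the Viète argument is `g = -c q / v³`, so
`p (1 + g) = p + c q / v`, and `4p³ + 27q² ≤ 0` says `|c q| ≤ v³`, i.e. `g ∈ [-1, 1]`.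
Differentiating, `(p + c q / v)' = p' + c q' / v + c q p' / (2v³) ≤ p' / 2` as soon as `p' ≤ 0`
and `q' ≤ 0`, using `c q ≥ -v³`. For the polynomials of the statement `p' = 2βz ≤ 0` and
`q' = 2δz + 3εz² ≤ 0`, because `δ = 3e₃ - e₂/3 ≤ 0` for the elementary symmetric functions of
`p₀, p₁, p₂` and `ε ≤ 0`. Half-angle: `τ = √(-p (1 + g) / 2) = √(-2p(1 + g)) / 2`, which is
differentiable because `p (1 + g) < 0`: it is `≤ 0` and strictly decreasing when `β < 0`, and
when `β = 0` the cubic is the negative constant `-2/27`.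
-/

open Real Set Filter Topology

/-- The argument of `arccos` in Viète's trigonometric solution
`t = 2√(-p/3) cos (⅓ arccos (vieteArg p q) - 2πk/3)` of the depressed cubic `t³ + p t + q = 0`. -/
noncomputable def vieteArg (p q : ℝ) : ℝ := 3 / 2 * (q / p) * √(-3 / p)

theorem exists_pos_eq_neg_sq {p : ℝ} (hp : p < 0) : ∃ v > 0, p = -v ^ 2 :=
  ⟨√(-p), sqrt_pos.2 (neg_pos.2 hp), by rw [sq_sqrt (neg_nonneg.2 hp.le), neg_neg]⟩

theorem vieteArg_eq {p : ℝ} (q : ℝ) (hp : p < 0) :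
    vieteArg p q = -(3 * √3 / 2 * q) / √(-p) ^ 3 := by
  obtain ⟨v, hv, rfl⟩ := exists_pos_eq_neg_sq hp
  simp only [vieteArg, neg_div, div_neg, neg_neg]
  rw [sqrt_div' _ (sq_nonneg v), sqrt_sq hv.le]
  field_simp

theorem mul_one_add_vieteArg {p : ℝ} (q : ℝ) (hp : p < 0) :
    p * (1 + vieteArg p q) = p + 3 * √3 / 2 * (q / √(-p)) := by
  rw [vieteArg_eq q hp]
  obtain ⟨v, hv, rfl⟩ := exists_pos_eq_neg_sq hp
  rw [neg_neg, sqrt_sq hv.le]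
  field_simp
  ring

theorem abs_mul_le_sqrt_neg_pow_three {p q : ℝ} (h : 4 * p ^ 3 + 27 * q ^ 2 ≤ 0) :
    |3 * √3 / 2 * q| ≤ √(-p) ^ 3 := by
  have hp : 0 ≤ -p :=
    neg_nonneg.2 ((Odd.pow_nonpos_iff (by decide)).1 (by nlinarith [sq_nonneg q] : p ^ 3 ≤ 0))
  refine abs_le_of_sq_le_sq ?_ (by positivity)
  rw [mul_pow, div_pow, mul_pow, sq_sqrt (by norm_num), ← pow_mul, pow_mul', sq_sqrt hp]
  nlinarith

theorem vieteArg_mem_Icc {p q : ℝ} (hp : p < 0) (h : 4 * p ^ 3 + 27 * q ^ 2 ≤ 0) :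
    vieteArg p q ∈ Icc (-1) 1 := by
  have hv : 0 < √(-p) ^ 3 := pow_pos (sqrt_pos.2 (neg_pos.2 hp)) 3
  refine abs_le.1 ?_
  rw [vieteArg_eq q hp, abs_div, abs_neg, abs_of_pos hv]
  exact div_le_one_of_le₀ (abs_mul_le_sqrt_neg_pow_three h) hv.le

theorem mul_one_add_vieteArg_nonpos {p q : ℝ} (hp : p < 0) (h : 4 * p ^ 3 + 27 * q ^ 2 ≤ 0) :
    p * (1 + vieteArg p q) ≤ 0 :=
  mul_nonpos_of_nonpos_of_nonneg hp.le (by linarith [(vieteArg_mem_Icc hp h).1])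

theorem mul_one_add_vieteArg_neg {p q : ℝ} (hp : p < 0) (hq : q ≤ 0) :
    p * (1 + vieteArg p q) < 0 := by
  rw [mul_one_add_vieteArg q hp]
  have : 3 * √3 / 2 * (q / √(-p)) ≤ 0 :=
    mul_nonpos_of_nonneg_of_nonpos (by positivity)
      (div_nonpos_of_nonpos_of_nonneg hq (sqrt_nonneg _))
  linarith

theorem sqrt_mul_cos_half_arccos (u : ℝ) {x : ℝ} (hx : x ∈ Icc (-1) 1) :
    √u * cos (1 / 2 * arccos x) = √(u * (1 + x) / 2) := by
  rw [one_div_mul_eq_div, cos_half (by linarith [arccos_nonneg x, pi_pos]) (arccos_le_pi x),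
    cos_arccos hx.1 hx.2, mul_div_assoc, sqrt_mul' _ (by linarith [hx.1])]

theorem sqrt_neg_mul_cos_half_arccos_vieteArg {p q : ℝ} (hp : p < 0)
    (h : 4 * p ^ 3 + 27 * q ^ 2 ≤ 0) :
    √(-p) * cos (1 / 2 * arccos (vieteArg p q)) = √(-2 * (p * (1 + vieteArg p q))) / 2 := by
  rw [sqrt_mul_cos_half_arccos _ (vieteArg_mem_Icc hp h),
    show -2 * (p * (1 + vieteArg p q)) = 2 ^ 2 * (-p * (1 + vieteArg p q) / 2) by ring,
    sqrt_mul (by norm_num), sqrt_sq (by norm_num)]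
  ring

theorem HasDerivAt.add_mul_div_sqrt_neg {P Q : ℝ → ℝ} {P' Q' x : ℝ} (c : ℝ)
    (hP : HasDerivAt P P' x) (hQ : HasDerivAt Q Q' x) (hx : P x < 0) :
    HasDerivAt (fun z => P z + c * (Q z / √(-P z)))
      (P' + c * (Q' / √(-P x) + Q x * P' / (2 * √(-P x) ^ 3))) x := by
  have hv : 0 < √(-P x) := sqrt_pos.2 (neg_pos.2 hx)
  refine (hP.add ((hQ.div (hP.neg.sqrt (neg_ne_zero.2 hx.ne)) hv.ne').const_mul c)).congr_deriv ?_
  simp only [Pi.neg_apply]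
  field_simp
  ring

theorem add_mul_div_add_div_le_half {P' Q' c q v : ℝ} (hc : 0 ≤ c) (hP' : P' ≤ 0) (hQ' : Q' ≤ 0)
    (hv : 0 < v) (hq : -v ^ 3 ≤ c * q) :
    P' + c * (Q' / v + q * P' / (2 * v ^ 3)) ≤ P' / 2 := by
  have hQ'v : c * (Q' / v) ≤ 0 :=
    mul_nonpos_of_nonneg_of_nonpos hc (div_nonpos_of_nonpos_of_nonneg hQ' hv.le)
  have hqP' : c * (q * P' / (2 * v ^ 3)) ≤ -P' / 2 := by
    rw [← mul_div_assoc, div_le_iff₀ (by positivity)]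
    nlinarith
  linarith [mul_add c (Q' / v) (q * P' / (2 * v ^ 3))]

theorem exists_hasDerivAt_mul_one_add_vieteArg_le {P Q : ℝ → ℝ} {P' Q' x : ℝ}
    (hP : HasDerivAt P P' x) (hQ : HasDerivAt Q Q' x) (hx : P x < 0) (hP' : P' ≤ 0) (hQ' : Q' ≤ 0)
    (h : 4 * P x ^ 3 + 27 * Q x ^ 2 ≤ 0) :
    ∃ h', HasDerivAt (fun z => P z * (1 + vieteArg (P z) (Q z))) h' x ∧ h' ≤ P' / 2 := by
  refine ⟨_, (hP.add_mul_div_sqrt_neg (3 * √3 / 2) hQ hx).congr_of_eventuallyEq ?_,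
    add_mul_div_add_div_le_half (by positivity) hP' hQ' (sqrt_pos.2 (neg_pos.2 hx))
      (neg_le_of_abs_le (abs_mul_le_sqrt_neg_pow_three h))⟩
  filter_upwards [hP.continuousAt.eventually (gt_mem_nhds hx)] with z hz
  exact mul_one_add_vieteArg _ hz

theorem Convex.antitoneOn_of_exists_hasDerivAt_nonpos {s : Set ℝ} (hs : Convex ℝ s) {f : ℝ → ℝ}
    (hf : ∀ x ∈ s, ∃ f', HasDerivAt f f' x ∧ f' ≤ 0) : AntitoneOn f s := by
  choose! f' hf' hf'0 using hf
  exact antitoneOn_of_hasDerivWithinAt_nonpos hs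
    (fun x hx => (hf' x hx).continuousAt.continuousWithinAt)
    (fun x hx => (hf' x (interior_subset hx)).hasDerivWithinAt)
    (fun x hx => hf'0 x (interior_subset hx))

theorem Convex.strictAntiOn_of_exists_hasDerivAt_neg {s : Set ℝ} (hs : Convex ℝ s) {f : ℝ → ℝ}
    (hf : ∀ x ∈ s, ∃ f', HasDerivAt f f' x ∧ f' < 0) : StrictAntiOn f s := by
  choose! f' hf' hf'0 using hf
  exact strictAntiOn_of_hasDerivWithinAt_neg hs
    (fun x hx => (hf' x hx).continuousAt.continuousWithinAt)
    (fun x hx => (hf' x (interior_subset hx)).hasDerivWithinAt)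
    (fun x hx => hf'0 x (interior_subset hx))

theorem StrictAntiOn.neg_of_nonpos_Ioo {f : ℝ → ℝ} {a b : ℝ} (hf : StrictAntiOn f (Ioo a b))
    (h : ∀ x ∈ Ioo a b, f x ≤ 0) {x : ℝ} (hx : x ∈ Ioo a b) : f x < 0 := by
  have hy : (a + x) / 2 ∈ Ioo a b := ⟨by linarith [hx.1], by linarith [hx.1, hx.2]⟩
  exact (hf hy hx (by linarith [hx.1])).trans_le (h _ hy)

theorem HasDerivAt.sqrt_neg_two_mul_div_two {f : ℝ → ℝ} {f' x : ℝ} (hf : HasDerivAt f f' x)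
    (hx : f x < 0) :
    HasDerivAt (fun w => √(-2 * f w) / 2) (-f' / (2 * √(-2 * f x))) x :=
  (((hf.const_mul (-2)).sqrt (by linarith)).div_const 2).congr_deriv (by ring)

theorem antitoneOn_mul_one_add_vieteArg_and_deriv {P Q : ℝ → ℝ} {a b : ℝ}
    (hderiv : ∀ z ∈ Ioo a b,
      ∃ h', HasDerivAt (fun w => P w * (1 + vieteArg (P w) (Q w))) h' z ∧ h' ≤ 0)
    (hneg : ∀ z ∈ Ioo a b, P z < 0) (hdisc : ∀ z ∈ Ioo a b, 4 * P z ^ 3 + 27 * Q z ^ 2 ≤ 0)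
    (hlt : ∀ z ∈ Ioo a b, P z * (1 + vieteArg (P z) (Q z)) < 0) :
    AntitoneOn (fun z => P z * (1 + vieteArg (P z) (Q z))) (Ioo a b) ∧
    ∀ z ∈ Ioo a b,
      deriv (fun w => √(-(P w)) * cos (1 / 2 * arccos (vieteArg (P w) (Q w)))) z
        = -(deriv (fun w => P w * (1 + vieteArg (P w) (Q w))) z)
            / (2 * √(-2 * P z * (1 + vieteArg (P z) (Q z)))) ∧
      0 ≤ deriv (fun w => √(-(P w)) * cos (1 / 2 * arccos (vieteArg (P w) (Q w)))) z := by
  refine ⟨(convex_Ioo a b).antitoneOn_of_exists_hasDerivAt_nonpos hderiv, fun z hz => ?_⟩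
  obtain ⟨h', hh', hle⟩ := hderiv z hz
  have hτ : (fun w => √(-(P w)) * cos (1 / 2 * arccos (vieteArg (P w) (Q w))))
      =ᶠ[𝓝 z] fun w => √(-2 * (P w * (1 + vieteArg (P w) (Q w)))) / 2 := by
    filter_upwards [Ioo_mem_nhds hz.1 hz.2] with w hw
    exact sqrt_neg_mul_cos_half_arccos_vieteArg (hneg w hw) (hdisc w hw)
  rw [hτ.deriv_eq, (hh'.sqrt_neg_two_mul_div_two (hlt z hz)).deriv, hh'.deriv, ← mul_assoc]
  exact ⟨rfl, div_nonneg (neg_nonneg.2 hle) (by positivity)⟩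

section QuadraticCubic

variable {A B G D E : ℝ}

theorem add_mul_sq_neg (hA : A ≤ 0) (hAB : A + B < 0) {z : ℝ} (hz : z ∈ Ioo (0 : ℝ) 1) :
    A + B * z ^ 2 < 0 := by
  have hz2 : 0 < z ^ 2 := pow_pos hz.1 2
  have hz2' : z ^ 2 < 1 := pow_lt_one₀ hz.1.le hz.2 two_ne_zero
  nlinarith

theorem exists_hasDerivAt_quadratic_mul_one_add_vieteArg_cubic_le (hA : A ≤ 0) (hAB : A + B < 0)
    (hB : B ≤ 0) (hD : D ≤ 0) (hE : E ≤ 0) {z : ℝ} (hz : z ∈ Ioo (0 : ℝ) 1)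
    (hdisc : 4 * (A + B * z ^ 2) ^ 3 + 27 * (G + D * z ^ 2 + E * z ^ 3) ^ 2 ≤ 0) :
    ∃ h', HasDerivAt (fun w => (A + B * w ^ 2) *
      (1 + vieteArg (A + B * w ^ 2) (G + D * w ^ 2 + E * w ^ 3))) h' z ∧ h' ≤ B * z := by
  have hP : HasDerivAt (fun w => A + B * w ^ 2) (2 * B * z) z :=
    (((hasDerivAt_pow 2 z).const_mul B).const_add A).congr_deriv (by ring)
  have hQ : HasDerivAt (fun w => G + D * w ^ 2 + E * w ^ 3) (2 * D * z + 3 * E * z ^ 2) z :=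
    ((((hasDerivAt_pow 2 z).const_mul D).const_add G).add
      ((hasDerivAt_pow 3 z).const_mul E)).congr_deriv (by ring)
  obtain ⟨h', hh', hle⟩ :=
    exists_hasDerivAt_mul_one_add_vieteArg_le hP hQ (add_mul_sq_neg hA hAB hz)
      (by nlinarith [hz.1]) (by nlinarith [hz.1, sq_nonneg z]) hdisc
  exact ⟨h', hh', by linarith⟩

theorem quadratic_mul_one_add_vieteArg_cubic_neg (hA : A ≤ 0) (hAB : A + B < 0) (hB : B ≤ 0)
    (hD : D ≤ 0) (hE : E ≤ 0) (hBG : B < 0 ∨ G ≤ 0)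
    (hdisc : ∀ z ∈ Ioo (0 : ℝ) 1,
      4 * (A + B * z ^ 2) ^ 3 + 27 * (G + D * z ^ 2 + E * z ^ 3) ^ 2 ≤ 0)
    {z : ℝ} (hz : z ∈ Ioo (0 : ℝ) 1) :
    (A + B * z ^ 2) * (1 + vieteArg (A + B * z ^ 2) (G + D * z ^ 2 + E * z ^ 3)) < 0 := by
  rcases hBG with hB' | hG
  · refine StrictAntiOn.neg_of_nonpos_Ioo ?_
      (fun x hx => mul_one_add_vieteArg_nonpos (add_mul_sq_neg hA hAB hx) (hdisc x hx)) hz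
    refine (convex_Ioo 0 1).strictAntiOn_of_exists_hasDerivAt_neg fun x hx => ?_
    obtain ⟨h', hh', hle⟩ :=
      exists_hasDerivAt_quadratic_mul_one_add_vieteArg_cubic_le hA hAB hB hD hE hx (hdisc x hx)
    exact ⟨h', hh', hle.trans_lt (mul_neg_of_neg_of_pos hB' hx.1)⟩
  · have hDz : D * z ^ 2 ≤ 0 := mul_nonpos_of_nonpos_of_nonneg hD (sq_nonneg z)
    have hEz : E * z ^ 3 ≤ 0 := mul_nonpos_of_nonpos_of_nonneg hE (pow_pos hz.1 3).le
    exact mul_one_add_vieteArg_neg (add_mul_sq_neg hA hAB hz) (by linarith)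

end QuadraticCubic

theorem three_mul_sum_mul_le_sq (a b c : ℝ) : 3 * (a * b + a * c + b * c) ≤ (a + b + c) ^ 2 := by
  nlinarith [sq_nonneg (a - b), sq_nonneg (a - c), sq_nonneg (b - c)]

theorem nine_mul_mul_le_sum_mul_sum_mul {a b c : ℝ} (ha : 0 ≤ a) (hb : 0 ≤ b) (hc : 0 ≤ c) :
    9 * (a * b * c) ≤ (a + b + c) * (a * b + a * c + b * c) := by
  nlinarith [mul_nonneg ha (sq_nonneg (b - c)), mul_nonneg hb (sq_nonneg (a - c)),
    mul_nonneg hc (sq_nonneg (a - b))]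

/-- the product `p(z)·(1 + g(z))` is monotone decreasing on (0,1), and
consequently `dτ(z,2)/dz = −(p(1+g))′/(2√(−2p(1+g))) ≥ 0` on (0,1), where
`τ(z,2) = √(−p(z))·cos((1/2)·arccos g(z))`. -/
theorem p_one_plus_g_antitone (p0 p1 p2 θ A B G D E : ℝ)
    (h0 : 0 ≤ p0) (h1 : 0 ≤ p1) (h2 : 0 ≤ p2) (hsum : p0 + p1 + p2 = 1)
    (hθ : θ ∈ Set.Icc (0:ℝ) (Real.pi / 2))
    (hA : A = (1/6) * (1 - 3*p0^2 - 3*p1^2 - 3*p2^2))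
    (hB : B = -(p0*p1 + p0*p2 + p1*p2))
    (hG : G = (1/27) * (3*p1 - 1) * (3*p2 - 1) * (3*p1 + 3*p2 - 2))
    (hD : D = (1/27) * (18*(p0*p1 + p0*p2 + p1*p2) -
        27*(p0^2*p1 + p0*p1^2 + p0^2*p2 + p1^2*p2 + p0*p2^2 + p1*p2^2)))
    (hE : E = -2*p0*p1*p2 * Real.cos θ)
    (P Q g : ℝ → ℝ)
    (hP : P = fun z => A + B*z^2)
    (hQ : Q = fun z => G + D*z^2 + E*z^3)
    (hg : g = fun z => (3/2) * (Q z / P z) * Real.sqrt (-3 / P z))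
    (hdisc : ∀ z ∈ Set.Ioo (0:ℝ) 1, 4*(P z)^3 + 27*(Q z)^2 ≤ 0) :
    AntitoneOn (fun z => P z * (1 + g z)) (Set.Ioo (0:ℝ) 1) ∧
    ∀ z ∈ Set.Ioo (0:ℝ) 1,
      deriv (fun w => Real.sqrt (-(P w)) * Real.cos ((1/2) * Real.arccos (g w))) z
        = -(deriv (fun w => P w * (1 + g w)) z)
            / (2 * Real.sqrt (-2 * P z * (1 + g z))) ∧
      0 ≤ deriv (fun w => Real.sqrt (-(P w)) * Real.cos ((1/2) * Real.arccos (g w))) z := by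
  have he2 : 3 * (p0*p1 + p0*p2 + p1*p2) ≤ 1 := by
    simpa [hsum] using three_mul_sum_mul_le_sq p0 p1 p2
  have he3 : 9 * (p0*p1*p2) ≤ p0*p1 + p0*p2 + p1*p2 := by
    simpa [hsum] using nine_mul_mul_le_sum_mul_sum_mul h0 h1 h2
  have he3' : 0 ≤ p0 * p1 * p2 := by positivity
  have hcos : 0 ≤ cos θ := cos_nonneg_of_mem_Icc ⟨by linarith [pi_pos, hθ.1], hθ.2⟩
  obtain rfl : p0 = 1 - p1 - p2 := by linarith
  have hA0 : A ≤ 0 := by rw [hA]; linear_combination (1/3) * he2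
  have hAB : A + B < 0 := by rw [hA, hB]; linear_combination
  have hB0 : B ≤ 0 := by rw [hB]; linarith
  have hD0 : D ≤ 0 := by rw [hD]; linear_combination (1/3) * he3
  have hE0 : E ≤ 0 := by rw [hE]; linear_combination 2 * mul_nonneg he3' hcos
  have hBG : B < 0 ∨ G ≤ 0 := by
    rcases hB0.lt_or_eq with hBneg | hBzero
    · exact .inl hBneg
    · right
      rw [hG]
      rw [hB] at hBzero
      linear_combination he3' - (1/3) * hBzero
  subst hP hQ hg
  exact antitoneOn_mul_one_add_vieteArg_and_deriv
    (fun z hz => (exists_hasDerivAt_quadratic_mul_one_add_vieteArg_cubic_le hA0 hAB hB0 hD0 hE0 hz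
      (hdisc z hz)).imp fun _ h => ⟨h.1, h.2.trans (mul_nonpos_of_nonpos_of_nonneg hB0 hz.1.le)⟩)
    (fun z hz => add_mul_sq_neg hA0 hAB hz) hdisc
    (fun z hz => quadratic_mul_one_add_vieteArg_cubic_neg hA0 hAB hB0 hD0 hE0 hBG hdisc hz)
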